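/- arXiv:2103.03439 — 2 statements merged into one kernel-verified Lean document; each statement's English description precedes it below -/
import Mathlib

section
/- Let p be an odd prime, let n ≥ 2 be an even natural number with p^a exactly dividing n (a ≥ 0), let l ≥ 1 be a natural number and k an integer. If there exist integers x_1, …, x_l and some j ≥ a+1 such that x_1^n + ⋯ + x_l^n ≡ k (mod p^j) and p ∤ x_i for some 1 ≤ i ≤ l, then for every i ≥ 1 there exist integers y_1, …, y_l with y_1^n + ⋯ + y_l^n ≡ k (mod p^i). -/
/-!
Hensel lifting for a coordinate `x` prime to `p`. Write `n = p^a u` with `p ∤ u` and let `s ≥ 1`.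
In the binomial expansion of `(x + t p^s)^n` the term of degree `k ≥ 2` is divisible by
`p^(ks + a - v_p(k))`, because `p^a ∣ n ∣ k·C(n,k)`; as `p ≥ 3` forces `v_p(k) + 2 ≤ k`, this is
at least `p^(s+a+1)`. Hence `(x + t p^s)^n ≡ x^n + u x^(n-1) t p^(s+a) (mod p^(s+a+1))`, and since
`u x^(n-1)` is invertible mod `p`, a solution mod `p^(s+a)` lifts to one mod `p^(s+a+1)` whose
moved coordinate is still prime to `p`.
-/

theorem dvd_add_pow_sub_sub_of_dvd {R : Type*} [CommRing R] {d x z : R} {n : ℕ}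
    (h : ∀ k ∈ Finset.Icc 2 n, d ∣ z ^ k * n.choose k) :
    d ∣ (x + z) ^ n - x ^ (n - 1) * z * n - x ^ n := by
  rcases n with - | m
  · simp
  have hsum : d ∣ ∑ i ∈ Finset.range m, z ^ (i + 2) * x ^ (m + 1 - (i + 2)) *
      ((m + 1).choose (i + 2) : R) := Finset.dvd_sum fun i hi => by
    have := h (i + 2) (by simp at hi ⊢; omega)
    rw [mul_right_comm]
    exact this.mul_right _
  rw [add_comm x z, add_pow, Finset.sum_range_succ', Finset.sum_range_succ']
  convert hsum using 1
  simp only [Nat.reduceSubDiff, zero_add, pow_one, add_tsub_cancel_right, Nat.choose_one_right,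
    Nat.cast_add, Nat.cast_one, pow_zero, tsub_zero, one_mul, Nat.choose_zero_right, mul_one]
  ring

theorem Nat.dvd_choose_mul_self (n k : ℕ) (hk : k ≠ 0) : n ∣ n.choose k * k := by
  obtain ⟨k, rfl⟩ := Nat.exists_eq_succ_of_ne_zero hk
  rcases n with - | n
  · simp
  exact ⟨n.choose k, (Nat.add_one_mul_choose_eq n k).symm⟩

theorem Nat.pow_dvd_choose_mul_ordProj {p a n k : ℕ} (hp : p.Prime) (hpa : p ^ a ∣ n)
    (hk : k ≠ 0) : p ^ a ∣ n.choose k * ordProj[p] k := by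
  have hcop : (p ^ a).Coprime (ordCompl[p] k) := (Nat.coprime_ordCompl hp hk).pow_left a
  refine hcop.dvd_of_dvd_mul_right ?_
  rw [mul_assoc, Nat.ordProj_mul_ordCompl_eq_self]
  exact hpa.trans (Nat.dvd_choose_mul_self n k hk)

theorem Nat.factorization_add_two_le {p k : ℕ} (hp : 3 ≤ p) (hk : 2 ≤ k) :
    k.factorization p + 2 ≤ k := by
  set v := k.factorization p
  rcases Nat.eq_zero_or_pos v with hv | hv
  · omega
  have hbernoulli : 1 + 2 * v ≤ 3 ^ v := by
    have := one_add_mul_le_pow (show (-2 : ℤ) ≤ 2 by norm_num) v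
    norm_num at this
    exact_mod_cast (by linarith : (1 : ℤ) + 2 * v ≤ 3 ^ v)
  have : p ^ v ≤ k := Nat.ordProj_le p (by omega)
  have : 3 ^ v ≤ p ^ v := Nat.pow_le_pow_left hp v
  omega

theorem Nat.pow_dvd_pow_mul_choose {p a n s k : ℕ} (hp : p.Prime) (hp3 : 3 ≤ p)
    (hpa : p ^ a ∣ n) (hs : 1 ≤ s) (hk : 2 ≤ k) :
    p ^ (s + a + 1) ∣ (p ^ s) ^ k * n.choose k := by
  set v := k.factorization p
  have hchoose := Nat.pow_dvd_choose_mul_ordProj hp hpa (k := k) (by omega)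
  have hv := Nat.factorization_add_two_le hp3 hk
  refine Nat.dvd_of_mul_dvd_mul_right (pow_pos hp.pos v) ?_
  calc p ^ (s + a + 1) * p ^ v ∣ p ^ (s * k) * p ^ a := by
        rw [← pow_add, ← pow_add]
        exact pow_dvd_pow p (by nlinarith)
    _ ∣ (p ^ s) ^ k * n.choose k * p ^ v := by
        rw [← pow_mul, mul_assoc]
        exact mul_dvd_mul_left _ hchoose

theorem Int.add_mul_pow_pow_modEq {p a n s : ℕ} (hp : p.Prime) (hp3 : 3 ≤ p) (hpa : p ^ a ∣ n)
    (hs : 1 ≤ s) (x t : ℤ) :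
    (x + t * p ^ s) ^ n ≡ x ^ n + x ^ (n - 1) * (t * p ^ s) * n [ZMOD p ^ (s + a + 1)] := by
  refine (Int.modEq_iff_dvd.mpr ?_).symm
  rw [← sub_sub, sub_right_comm]
  refine dvd_add_pow_sub_sub_of_dvd fun k hk => ?_
  have hterm : ((p ^ (s + a + 1) : ℕ) : ℤ) ∣ ((p ^ s) ^ k * n.choose k : ℕ) :=
    Int.natCast_dvd_natCast.mpr (Nat.pow_dvd_pow_mul_choose hp hp3 hpa hs (Finset.mem_Icc.mp hk).1)
  push_cast at hterm
  rw [mul_pow, mul_assoc]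
  exact hterm.mul_left _

theorem Int.exists_pow_modEq_pow_succ {p a n m : ℕ} (hp : p.Prime) (hp3 : 3 ≤ p)
    (hpa : p ^ a ∣ n) (hpa' : ¬ p ^ (a + 1) ∣ n) (hm : a < m) {x c : ℤ} (hx : ¬ (p : ℤ) ∣ x)
    (hxc : x ^ n ≡ c [ZMOD p ^ m]) :
    ∃ y : ℤ, ¬ (p : ℤ) ∣ y ∧ y ^ n ≡ c [ZMOD p ^ (m + 1)] := by
  obtain ⟨s, hs, rfl⟩ : ∃ s, 1 ≤ s ∧ m = s + a := ⟨m - a, by omega, by omega⟩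
  obtain ⟨u, rfl⟩ := hpa
  have hpZ : Prime (p : ℤ) := Nat.prime_iff_prime_int.mp hp
  have hu : ¬ (p : ℤ) ∣ u := fun h => hpa' <| by
    rw [pow_succ]; exact mul_dvd_mul_left _ (Int.natCast_dvd_natCast.mp h)
  obtain ⟨r, w, hrw⟩ : IsCoprime (p : ℤ) (u * x ^ (p ^ a * u - 1)) :=
    hpZ.coprime_iff_not_dvd.mpr fun h => (hpZ.dvd_or_dvd h).elim hu
      fun h => hx (hpZ.dvd_of_dvd_pow h)
  obtain ⟨d, hd⟩ := hxc.dvd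
  refine ⟨x + w * d * p ^ s, fun h => hx ?_, ?_⟩
  · simpa using dvd_sub h ((dvd_pow_self (p : ℤ) (by omega : s ≠ 0)).mul_left (w * d))
  refine (Int.add_mul_pow_pow_modEq hp hp3 (dvd_mul_right _ u) hs x _).trans ?_
  refine Int.modEq_iff_dvd.mpr ⟨d * r, ?_⟩
  push_cast
  linear_combination hd - (p : ℤ) ^ (s + a) * d * hrw

def HasPrimitiveSolution (ι : Type*) [Fintype ι] (p n m : ℕ) (k : ℤ) : Prop :=
  ∃ x : ι → ℤ, (∑ t, x t ^ n ≡ k [ZMOD (p : ℤ) ^ m]) ∧ ∃ i, ¬ (p : ℤ) ∣ x i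

namespace HasPrimitiveSolution

variable {ι : Type*} [Fintype ι] {p a n m : ℕ} {k : ℤ}

theorem succ (hp : p.Prime) (hp3 : 3 ≤ p) (hpa : p ^ a ∣ n) (hpa' : ¬ p ^ (a + 1) ∣ n)
    (hm : a < m) (h : HasPrimitiveSolution ι p n m k) : HasPrimitiveSolution ι p n (m + 1) k := by
  classical
  obtain ⟨x, hx, i, hi⟩ := h
  rw [Fintype.sum_eq_add_sum_compl i] at hx
  set rest := ∑ t ∈ {i}ᶜ, x t ^ n
  have hxi : x i ^ n ≡ k - rest [ZMOD p ^ m] := by simpa using hx.sub_right rest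
  obtain ⟨y, hy, hyc⟩ := Int.exists_pow_modEq_pow_succ hp hp3 hpa hpa' hm hi hxi
  refine ⟨Function.update x i y, ?_, i, by simpa using hy⟩
  have hrest : ∑ t ∈ {i}ᶜ, Function.update x i y t ^ n = rest :=
    Finset.sum_congr rfl fun t ht => by rw [Function.update_of_ne (by simpa using ht)]
  rw [Fintype.sum_eq_add_sum_compl i, Function.update_self, hrest]
  simpa using hyc.add_right rest

theorem mono (hp : p.Prime) (hp3 : 3 ≤ p) (hpa : p ^ a ∣ n) (hpa' : ¬ p ^ (a + 1) ∣ n)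
    (hm : a < m) (h : HasPrimitiveSolution ι p n m k) {m' : ℕ} (hmm' : m ≤ m') :
    HasPrimitiveSolution ι p n m' k := by
  induction m', hmm' using Nat.le_induction with
  | base => exact h
  | succ m' hmm' ih => exact ih.succ hp hp3 hpa hpa' (by omega)

end HasPrimitiveSolution

theorem stmt_2_general (p n a l : ℕ) (k : ℤ) (hp : p.Prime) (hp2 : p ≠ 2)
    (hpa : p ^ a ∣ n ∧ ¬ p ^ (a + 1) ∣ n)
    (hsol : ∃ j, a + 1 ≤ j ∧ ∃ x : Fin l → ℤ,
      ((∑ t, x t ^ n) ≡ k [ZMOD (p : ℤ) ^ j]) ∧ ∃ i, ¬ (p : ℤ) ∣ x i) :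
    ∀ i, 1 ≤ i → ∃ y : Fin l → ℤ, (∑ t, y t ^ n) ≡ k [ZMOD (p : ℤ) ^ i] := by
  have hp3 : 3 ≤ p := (hp.two_le.lt_of_ne' hp2).nat_succ_le
  obtain ⟨j, hj, hsol⟩ := hsol
  intro i _
  obtain ⟨y, hy, -⟩ := HasPrimitiveSolution.mono hp hp3 hpa.1 hpa.2 hj hsol (le_max_right i j)
  exact ⟨y, hy.of_dvd (pow_dvd_pow _ (le_max_left i j))⟩

/-- Odd prime `p`, even `n ≥ 2`, `p^a || n`, `l ≥ 1`: a solution of the congruence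
mod `p^j` for some `j ≥ a+1` with some coordinate not divisible by `p` yields
solutions mod `p^i` for all `i ≥ 1`. -/
theorem stmt_2 (p n a l : ℕ) (k : ℤ) (hp : p.Prime) (hp2 : p ≠ 2)
    (hn : 2 ≤ n) (hneven : Even n)
    (hpa : p ^ a ∣ n ∧ ¬ p ^ (a + 1) ∣ n) (hl : 1 ≤ l)
    (hsol : ∃ j, a + 1 ≤ j ∧ ∃ x : Fin l → ℤ,
      ((∑ t, x t ^ n) ≡ k [ZMOD (p : ℤ) ^ j]) ∧ ∃ i, ¬ (p : ℤ) ∣ x i) :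
    ∀ i, 1 ≤ i → ∃ y : Fin l → ℤ, (∑ t, y t ^ n) ≡ k [ZMOD (p : ℤ) ^ i] :=
  stmt_2_general p n a l k hp hp2 hpa hsol
end

section
/- Let p be an odd prime, let n ≥ 2 be an even natural number, and set d = gcd(n, p−1). Suppose d > 1 and write p = d·s + 1 with s = (p−1)/d, and assume s ≥ 2. Then for h = ⌈d·s/(s−1)⌉, every element of ℤ/pℤ is a sum of h nonzero n-th powers; that is, for every c ∈ ℤ/pℤ there exist x_1, …, x_h ∈ ℤ/pℤ, all nonzero, with x_1^n + ⋯ + x_h^n = c. -/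
/-!
The nonzero `n`-th powers in `ℤ/pℤ` are the image of the `n`-th power map on the cyclic group
`(ℤ/pℤ)ˣ`, so they form a set `A` of exactly `(p - 1) / gcd(n, p - 1) = s` elements. Iterating
Cauchy–Davenport gives `|hA| ≥ min(p, h(s - 1) + 1)`, and `h(s - 1) ≥ ds = p - 1` by the choice
of `h`, hence `hA = ℤ/pℤ`.
-/

open Finset Pointwise

section PowerResidues

variable (K : Type*) [Field K] [Fintype K] [DecidableEq K]

def nthPowerResidues (n : ℕ) : Finset K :=
  univ.image fun x : Kˣ => ((x ^ n : Kˣ) : K)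

theorem card_nthPowerResidues (n : ℕ) :
    #(nthPowerResidues K n) = (Fintype.card K - 1) / (Fintype.card K - 1).gcd n := by
  classical
  have h := IsCyclic.card_powMonoidHom_range Kˣ n
  rw [Nat.card_units, Nat.card_eq_fintype_card (α := K), ← SetLike.coe_sort_coe,
    Nat.card_eq_card_toFinset, MonoidHom.coe_range, Set.toFinset_range] at h
  rw [← h, nthPowerResidues, ← card_image_of_injective _ Units.val_injective, image_image]
  rfl

theorem nthPowerResidues_nonempty (n : ℕ) : (nthPowerResidues K n).Nonempty :=
  image_nonempty.mpr univ_nonempty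

variable {K}

theorem exists_sum_pow_eq_of_mem_nsmul_nthPowerResidues {n k : ℕ} {c : K}
    (hc : c ∈ k • nthPowerResidues K n) :
    ∃ x : Fin k → K, (∀ i, x i ≠ 0) ∧ ∑ i, x i ^ n = c := by
  obtain ⟨a, rfl⟩ := mem_nsmul.mp hc
  have ha : ∀ i, ∃ u : Kˣ, ((u ^ n : Kˣ) : K) = a i := fun i => by
    simpa [nthPowerResidues] using (a i).2
  choose u hu using ha
  exact ⟨fun i => u i, fun i => (u i).ne_zero, by simp [List.sum_ofFn, ← hu]⟩

end PowerResidues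

theorem ZMod.min_le_card_nsmul {p : ℕ} (hp : p.Prime) {A : Finset (ZMod p)} (hA : A.Nonempty)
    (k : ℕ) : min p (k * (#A - 1) + 1) ≤ #(k • A) := by
  induction k with
  | zero => simp
  | succ k ih =>
    have hcd := ZMod.cauchy_davenport hp (hA.nsmul (n := k)) hA
    have hA_pos := hA.card_pos
    have hp_pos := hp.pos
    rw [succ_nsmul, add_one_mul]
    omega

theorem stmt_16_general (p n d s h : ℕ) (hp : p.Prime)
    (hd : d = Nat.gcd n (p - 1)) (hd1 : 1 < d)
    (hpds : p = d * s + 1) (hs2 : 2 ≤ s)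
    (hh : h = (d * s + s - 2) / (s - 1)) :
    ∀ c : ZMod p, ∃ x : Fin h → ZMod p, (∀ i, x i ≠ 0) ∧ ∑ i, x i ^ n = c := by
  intro c
  have := Fact.mk hp
  have hp1 : p - 1 = d * s := by omega
  have hA : #(nthPowerResidues (ZMod p) n) = s := by
    rw [card_nthPowerResidues, ZMod.card, Nat.gcd_comm, ← hd, hp1]
    exact Nat.mul_div_cancel_left s (by omega)
  have hceil : d * s ≤ h * (s - 1) := by
    have hh' : h = d * s ⌈/⌉ (s - 1) := by
      rw [hh, Nat.ceilDiv_eq_add_pred_div]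
      congr 1
      omega
    simpa [hh', mul_comm] using le_smul_ceilDiv (b := d * s) (by omega : 0 < s - 1)
  have hfull : h • nthPowerResidues (ZMod p) n = univ := by
    have hcd := ZMod.min_le_card_nsmul hp (nthPowerResidues_nonempty (ZMod p) n) h
    rw [hA] at hcd
    refine eq_univ_of_card _ (le_antisymm (card_le_univ _) ?_)
    rw [ZMod.card]
    omega
  exact exists_sum_pow_eq_of_mem_nsmul_nthPowerResidues (hfull ▸ mem_univ c)

/-- Odd prime `p`, even `n ≥ 2`, `d = gcd(n, p-1) > 1`, `p = d·s + 1` with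
`s = (p-1)/d ≥ 2`: with `h = ⌈ds/(s-1)⌉`, every element of `ℤ/pℤ` is a sum of
`h` nonzero `n`-th powers. -/
theorem stmt_16 (p n d s h : ℕ) (hp : p.Prime) (hp2 : p ≠ 2)
    (hn : 2 ≤ n) (hneven : Even n)
    (hd : d = Nat.gcd n (p - 1)) (hd1 : 1 < d) (hs : s = (p - 1) / d)
    (hpds : p = d * s + 1) (hs2 : 2 ≤ s)
    (hh : h = (d * s + s - 2) / (s - 1)) :
    ∀ c : ZMod p, ∃ x : Fin h → ZMod p, (∀ i, x i ≠ 0) ∧ ∑ i, x i ^ n = c :=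
  stmt_16_general p n d s h hp hd hd1 hpds hs2 hh
end
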